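/- For monotone functions on the uniform Boolean hypercube, the Shapley global impact equals the Banzhaf global impact: Σ_{x ∈ {0,1}^k} |φ_i(x)| = Σ_{x ∈ {0,1}^k} |β_i(x)| for every feature i in which f is monotone. -/

import Mathlib

open Finset

noncomputable def cubeG (k : ℕ) (f : (Fin k → Bool) → ℝ) (x : Fin k → Bool)
    (S : Finset (Fin k)) : ℝ :=
  (∑ x' ∈ univ.filter (fun x' : Fin k → Bool => ∀ j ∈ S, x' j = x j), f x') /
    (2 : ℝ) ^ (k - S.card)

def flipAt (k : ℕ) (x : Fin k → Bool) (i : Fin k) : Fin k → Bool :=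
  Function.update x i (!x i)

lemma flipAt_self {k : ℕ} (x : Fin k → Bool) (i : Fin k) : flipAt k x i i = ! x i := by
  simp [flipAt]

lemma flipAt_ne {k : ℕ} (x : Fin k → Bool) (i j : Fin k) (h : j ≠ i) :
    flipAt k x i j = x j := by
  simp [flipAt, Function.update_of_ne h]

lemma flipAt_flipAt {k : ℕ} (x : Fin k → Bool) (i : Fin k) :
    flipAt k (flipAt k x i) i = x := by
  funext j
  by_cases h : j = i
  · subst h; simp [flipAt]
  · simp [flipAt, Function.update_of_ne h]

lemma card_agree {k : ℕ} (T : Finset (Fin k)) (y : Fin k → Bool) :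
    (univ.filter (fun z : Fin k → Bool => ∀ j ∈ T, z j = y j)).card = 2 ^ (k - T.card) := by
  classical
  have e : {z : Fin k → Bool // ∀ j ∈ T, z j = y j} ≃ ({j : Fin k // j ∉ T} → Bool) :=
    { toFun := fun z j => z.1 j.1
      invFun := fun g =>
        ⟨fun j => if h : j ∈ T then y j else g ⟨j, h⟩, by intro j hj; simp [hj]⟩
      left_inv := by
        rintro ⟨z, hz⟩
        ext j
        by_cases h : j ∈ T
        · simp [h, hz j h]
        · simp [h]
      right_inv := by
        intro g
        funext j
        simp [j.2] }
  have h1 : (univ.filter (fun z : Fin k → Bool => ∀ j ∈ T, z j = y j)).card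
      = Fintype.card {z : Fin k → Bool // ∀ j ∈ T, z j = y j} := by
    rw [Fintype.card_subtype]
  rw [h1, Fintype.card_congr e, Fintype.card_fun]
  have h2 : Fintype.card {j : Fin k // j ∉ T} = k - T.card := by
    rw [Fintype.card_subtype_compl]
    simp
  rw [h2]
  simp

lemma cubeG_diff {k : ℕ} (f : (Fin k → Bool) → ℝ) (i : Fin k) (x : Fin k → Bool)
    (S : Finset (Fin k)) (hiS : i ∉ S) (hS : S.card < k) :
    cubeG k f x (insert i S) - cubeG k f x S
      = (∑ x' ∈ univ.filter (fun x' : Fin k → Bool => ∀ j ∈ insert i S, x' j = x j),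
          (f x' - f (flipAt k x' i))) / 2 ^ (k - S.card) := by
  classical
  set A := univ.filter (fun x' : Fin k → Bool => ∀ j ∈ insert i S, x' j = x j) with hA
  set B := univ.filter
      (fun x' : Fin k → Bool => (∀ j ∈ S, x' j = x j) ∧ ¬ (x' i = x i)) with hB
  have hsplit := Finset.sum_filter_add_sum_filter_not
    (univ.filter (fun x' : Fin k → Bool => ∀ j ∈ S, x' j = x j))
    (fun x' => x' i = x i) f
  rw [Finset.filter_filter, Finset.filter_filter] at hsplit
  have hAeq : Finset.filter
      (fun a : Fin k → Bool => (∀ j ∈ S, a j = x j) ∧ a i = x i) univ = A := by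
    rw [hA]
    apply Finset.filter_congr
    intro z _
    simp [Finset.forall_mem_insert, and_comm]
  have hBeq : Finset.filter
      (fun a : Fin k → Bool => (∀ j ∈ S, a j = x j) ∧ ¬ a i = x i) univ = B := by
    rw [hB]
  rw [hAeq, hBeq] at hsplit
  have hmemAB : ∀ z ∈ A, flipAt k z i ∈ B := by
    intro z hz
    rw [hA, mem_filter] at hz
    rw [hB, mem_filter]
    refine ⟨mem_univ _, ?_, ?_⟩
    · intro j hj
      have hji : j ≠ i := fun h => hiS (h ▸ hj)
      rw [flipAt_ne z i j hji]
      exact hz.2 j (mem_insert_of_mem hj)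
    · rw [flipAt_self]
      have := hz.2 i (mem_insert_self i S)
      rw [this]
      cases x i <;> simp
  have hmemBA : ∀ z ∈ B, flipAt k z i ∈ A := by
    intro z hz
    rw [hB, mem_filter] at hz
    rw [hA, mem_filter]
    refine ⟨mem_univ _, ?_⟩
    intro j hj
    rcases Finset.mem_insert.mp hj with h | h
    · rw [h, flipAt_self]
      have h2 := hz.2.2
      cases hzi : z i <;> cases hxi : x i <;> simp_all
    · have hji : j ≠ i := fun hh => hiS (hh ▸ h)
      rw [flipAt_ne z i j hji]
      exact hz.2.1 j h
  have himg : ∑ x' ∈ B, f x' = ∑ x' ∈ A, f (flipAt k x' i) := by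
    refine Finset.sum_nbij' (fun z => flipAt k z i) (fun z => flipAt k z i)
      hmemBA hmemAB ?_ ?_ ?_
    · intro z _; exact flipAt_flipAt z i
    · intro z _; exact flipAt_flipAt z i
    · intro z _; exact (congrArg f (flipAt_flipAt z i)).symm
  have hc : (insert i S).card = S.card + 1 := card_insert_of_notMem hiS
  have hp : (2:ℝ) ^ (k - S.card) = 2 * 2 ^ (k - (S.card + 1)) := by
    have h3 : k - S.card = (k - (S.card + 1)) + 1 := by omega
    rw [h3, pow_succ]; ring
  unfold cubeG
  rw [hc, ← hsplit, himg, Finset.sum_sub_distrib, hp]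
  have hne : (2:ℝ) ^ (k - (S.card + 1)) ≠ 0 := by positivity
  field_simp
  have hA2 : Finset.filter
      (fun x' : Fin k → Bool => x' i = x i ∧ ∀ a ∈ S, x' a = x a) univ = A := by
    rw [hA]
    apply Finset.filter_congr
    intro z _
    simp [Finset.forall_mem_insert]
  rw [← hA]
  ring

lemma swap_sum {k : ℕ} (T : Finset (Fin k)) (h : (Fin k → Bool) → ℝ) :
    ∑ x : Fin k → Bool,
        ∑ x' ∈ univ.filter (fun x' : Fin k → Bool => ∀ j ∈ T, x' j = x j), h x'
      = 2 ^ (k - T.card) * ∑ z : Fin k → Bool, h z := by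
  classical
  simp_rw [Finset.sum_filter]
  rw [Finset.sum_comm]
  have key : ∀ x' : Fin k → Bool,
      (∑ x : Fin k → Bool, if ∀ j ∈ T, x' j = x j then h x' else 0)
        = 2 ^ (k - T.card) * h x' := by
    intro x'
    rw [← Finset.sum_filter, Finset.sum_const, nsmul_eq_mul]
    congr 1
    have hf : (univ.filter (fun x : Fin k → Bool => ∀ j ∈ T, x' j = x j))
        = (univ.filter (fun x : Fin k → Bool => ∀ j ∈ T, x j = x' j)) := by
      apply Finset.filter_congr
      intro z _
      simp [eq_comm]
    rw [hf, card_agree]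
    push_cast
    ring
  rw [Finset.sum_congr rfl (fun x' _ => key x'), ← Finset.mul_sum]

lemma sum_choose_inv {k : ℕ} (i : Fin k) :
    ∑ S ∈ ((univ : Finset (Fin k)).erase i).powerset,
      ((Nat.choose (k - 1) S.card : ℝ))⁻¹ = k := by
  have hk : 0 < k := i.pos
  rw [Finset.sum_powerset]
  have hcard : ((univ : Finset (Fin k)).erase i).card = k - 1 := by
    rw [card_erase_of_mem (mem_univ i), card_univ, Fintype.card_fin]
  rw [hcard]
  have key : ∀ j ∈ Finset.range (k - 1 + 1),
      (∑ t ∈ Finset.powersetCard j ((univ : Finset (Fin k)).erase i),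
        ((Nat.choose (k - 1) t.card : ℝ))⁻¹) = 1 := by
    intro j hj
    have hj' : j ≤ k - 1 := by
      have := Finset.mem_range.mp hj
      omega
    have hall : ∀ t ∈ Finset.powersetCard j ((univ : Finset (Fin k)).erase i),
        ((Nat.choose (k - 1) t.card : ℝ))⁻¹ = ((Nat.choose (k - 1) j : ℝ))⁻¹ := by
      intro t ht
      rw [(Finset.mem_powersetCard.mp ht).2]
    rw [Finset.sum_congr rfl hall, Finset.sum_const, Finset.card_powersetCard, hcard,
      nsmul_eq_mul]
    have hpos : 0 < (k - 1).choose j := Nat.choose_pos hj'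
    have : ((k - 1).choose j : ℝ) ≠ 0 := by positivity
    field_simp
  rw [Finset.sum_congr rfl key, Finset.sum_const, Finset.card_range, nsmul_eq_mul, mul_one]
  have : k - 1 + 1 = k := by omega
  rw [this]

theorem shapley_global_impact_eq_banzhaf_global_impact
    (k : ℕ) (f : (Fin k → Bool) → ℝ) (i : Fin k)
    (hmono : ∃ ε : ℝ, (ε = 1 ∨ ε = -1) ∧
      ∀ x : Fin k → Bool, x i = true → 0 ≤ ε * (f x - f (flipAt k x i))) :
    ∑ x : Fin k → Bool,
        |(1 / (k : ℝ)) *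
          ∑ S ∈ ((univ : Finset (Fin k)).erase i).powerset,
            ((Nat.choose (k - 1) S.card : ℝ))⁻¹ *
              (cubeG k f x (insert i S) - cubeG k f x S)|
      =
    ∑ x : Fin k → Bool,
        |(1 / (2 : ℝ) ^ (k - 1)) *
          ∑ S ∈ ((univ : Finset (Fin k)).erase i).powerset,
            (cubeG k f x (insert i S) - cubeG k f x S)| := by
  classical
  obtain ⟨ε, hε, hm⟩ := hmono
  have hk : 0 < k := i.pos
  set P := ((univ : Finset (Fin k)).erase i).powerset with hP
  set s : (Fin k → Bool) → ℝ := fun z => if z i = true then ε else -ε with hsdef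
  set d : (Fin k → Bool) → ℝ := fun z => f z - f (flipAt k z i) with hddef
  set h : (Fin k → Bool) → ℝ := fun z => s z * d z with hhdef
  set H : ℝ := ∑ z : Fin k → Bool, h z with hHdef
  have hsabs : ∀ z, |s z| = 1 := by
    intro z; rcases hε with h1 | h1 <;> by_cases hz : z i = true <;>
      simp [hsdef, hz, h1]
  have hpos : ∀ z, 0 ≤ h z := by
    intro z
    by_cases hz : z i = true
    · have h2 := hm z hz
      simp only [hhdef, hsdef, hddef, hz, if_true]
      exact h2
    · have hz' : z i = false := by simpa using hz
      have h1 : (flipAt k z i) i = true := by rw [flipAt_self, hz']; rfl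
      have h2 := hm (flipAt k z i) h1
      rw [flipAt_flipAt] at h2
      simp only [hhdef, hsdef, hddef, hz']
      simp only [Bool.false_eq_true, if_false]
      nlinarith [h2]
  have hSfacts : ∀ S ∈ P, i ∉ S ∧ S.card < k := by
    intro S hS
    have hsub := Finset.mem_powerset.mp hS
    constructor
    · intro hi; exact (Finset.mem_erase.mp (hsub hi)).1 rfl
    · have hle := Finset.card_le_card hsub
      rw [card_erase_of_mem (mem_univ i), card_univ, Fintype.card_fin] at hle
      omega
  have hdiff : ∀ (x : Fin k → Bool), ∀ S ∈ P,
      cubeG k f x (insert i S) - cubeG k f x S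
        = (∑ x' ∈ univ.filter (fun x' : Fin k → Bool => ∀ j ∈ insert i S, x' j = x j),
            d x') / 2 ^ (k - S.card) := by
    intro x S hS
    exact cubeG_diff f i x S (hSfacts S hS).1 (hSfacts S hS).2
  have hsd : ∀ (x : Fin k → Bool) (S : Finset (Fin k)),
      s x * ((∑ x' ∈ univ.filter
          (fun x' : Fin k → Bool => ∀ j ∈ insert i S, x' j = x j), d x') / 2 ^ (k - S.card))
        = (∑ x' ∈ univ.filter
            (fun x' : Fin k → Bool => ∀ j ∈ insert i S, x' j = x j), h x') / 2 ^ (k - S.card) := by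
    intro x S
    rw [← mul_div_assoc]
    congr 1
    rw [Finset.mul_sum]
    apply Finset.sum_congr rfl
    intro x' hx'
    have hxi : x' i = x i := (mem_filter.mp hx').2 i (mem_insert_self i S)
    show s x * d x' = s x' * d x'
    rw [hsdef]
    simp only [hxi]
  -- the nonnegative sum expressions
  have hQnn : ∀ (x : Fin k → Bool) (S : Finset (Fin k)),
      0 ≤ (∑ x' ∈ univ.filter
          (fun x' : Fin k → Bool => ∀ j ∈ insert i S, x' j = x j), h x') / 2 ^ (k - S.card) := by
    intro x S
    apply div_nonneg (Finset.sum_nonneg fun z _ => hpos z) (by positivity)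
  have habs1 : ∀ x : Fin k → Bool,
      |(1 / (k : ℝ)) * ∑ S ∈ P, ((Nat.choose (k - 1) S.card : ℝ))⁻¹ *
          (cubeG k f x (insert i S) - cubeG k f x S)|
        = (1 / (k : ℝ)) * ∑ S ∈ P, ((Nat.choose (k - 1) S.card : ℝ))⁻¹ *
            ((∑ x' ∈ univ.filter
              (fun x' : Fin k → Bool => ∀ j ∈ insert i S, x' j = x j), h x')
                / 2 ^ (k - S.card)) := by
    intro x
    have e1 : s x * ((1 / (k : ℝ)) * ∑ S ∈ P, ((Nat.choose (k - 1) S.card : ℝ))⁻¹ *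
          (cubeG k f x (insert i S) - cubeG k f x S))
        = (1 / (k : ℝ)) * ∑ S ∈ P, ((Nat.choose (k - 1) S.card : ℝ))⁻¹ *
            ((∑ x' ∈ univ.filter
              (fun x' : Fin k → Bool => ∀ j ∈ insert i S, x' j = x j), h x')
                / 2 ^ (k - S.card)) := by
      rw [mul_left_comm]
      congr 1
      rw [Finset.mul_sum]
      apply Finset.sum_congr rfl
      intro S hS
      rw [hdiff x S hS, mul_left_comm, hsd x S]
    have hnn : 0 ≤ s x * ((1 / (k : ℝ)) * ∑ S ∈ P, ((Nat.choose (k - 1) S.card : ℝ))⁻¹ *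
          (cubeG k f x (insert i S) - cubeG k f x S)) := by
      rw [e1]
      apply mul_nonneg (by positivity)
      apply Finset.sum_nonneg
      intro S hS
      exact mul_nonneg (by positivity) (hQnn x S)
    calc |(1 / (k : ℝ)) * ∑ S ∈ P, ((Nat.choose (k - 1) S.card : ℝ))⁻¹ *
          (cubeG k f x (insert i S) - cubeG k f x S)|
        = |s x| * |(1 / (k : ℝ)) * ∑ S ∈ P, ((Nat.choose (k - 1) S.card : ℝ))⁻¹ *
          (cubeG k f x (insert i S) - cubeG k f x S)| := by rw [hsabs x, one_mul]
      _ = |s x * ((1 / (k : ℝ)) * ∑ S ∈ P, ((Nat.choose (k - 1) S.card : ℝ))⁻¹ *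
          (cubeG k f x (insert i S) - cubeG k f x S))| := (abs_mul _ _).symm
      _ = s x * ((1 / (k : ℝ)) * ∑ S ∈ P, ((Nat.choose (k - 1) S.card : ℝ))⁻¹ *
          (cubeG k f x (insert i S) - cubeG k f x S)) := abs_of_nonneg hnn
      _ = _ := e1
  have habs2 : ∀ x : Fin k → Bool,
      |(1 / (2 : ℝ) ^ (k - 1)) * ∑ S ∈ P,
          (cubeG k f x (insert i S) - cubeG k f x S)|
        = (1 / (2 : ℝ) ^ (k - 1)) * ∑ S ∈ P,
            ((∑ x' ∈ univ.filter
              (fun x' : Fin k → Bool => ∀ j ∈ insert i S, x' j = x j), h x')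
                / 2 ^ (k - S.card)) := by
    intro x
    have e1 : s x * ((1 / (2 : ℝ) ^ (k - 1)) * ∑ S ∈ P,
          (cubeG k f x (insert i S) - cubeG k f x S))
        = (1 / (2 : ℝ) ^ (k - 1)) * ∑ S ∈ P,
            ((∑ x' ∈ univ.filter
              (fun x' : Fin k → Bool => ∀ j ∈ insert i S, x' j = x j), h x')
                / 2 ^ (k - S.card)) := by
      rw [mul_left_comm]
      congr 1
      rw [Finset.mul_sum]
      apply Finset.sum_congr rfl
      intro S hS
      rw [hdiff x S hS, hsd x S]
    have hnn : 0 ≤ s x * ((1 / (2 : ℝ) ^ (k - 1)) * ∑ S ∈ P,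
          (cubeG k f x (insert i S) - cubeG k f x S)) := by
      rw [e1]
      apply mul_nonneg (by positivity)
      exact Finset.sum_nonneg fun S hS => hQnn x S
    calc |(1 / (2 : ℝ) ^ (k - 1)) * ∑ S ∈ P,
          (cubeG k f x (insert i S) - cubeG k f x S)|
        = |s x| * |(1 / (2 : ℝ) ^ (k - 1)) * ∑ S ∈ P,
          (cubeG k f x (insert i S) - cubeG k f x S)| := by rw [hsabs x, one_mul]
      _ = |s x * ((1 / (2 : ℝ) ^ (k - 1)) * ∑ S ∈ P,
          (cubeG k f x (insert i S) - cubeG k f x S))| := (abs_mul _ _).symm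
      _ = s x * ((1 / (2 : ℝ) ^ (k - 1)) * ∑ S ∈ P,
          (cubeG k f x (insert i S) - cubeG k f x S)) := abs_of_nonneg hnn
      _ = _ := e1
  rw [Finset.sum_congr rfl fun x _ => habs1 x, Finset.sum_congr rfl fun x _ => habs2 x]
  -- key: for each S, the sum over x of the inner quantity is H / 2
  have hQ : ∀ S ∈ P, (∑ x : Fin k → Bool,
      (∑ x' ∈ univ.filter
          (fun x' : Fin k → Bool => ∀ j ∈ insert i S, x' j = x j), h x')
        / 2 ^ (k - S.card)) = H / 2 := by
    intro S hS
    rw [← Finset.sum_div, swap_sum (insert i S) h,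
      card_insert_of_notMem (hSfacts S hS).1]
    have hlt := (hSfacts S hS).2
    have hp : (2 : ℝ) ^ (k - S.card) = 2 * 2 ^ (k - (S.card + 1)) := by
      have h3 : k - S.card = (k - (S.card + 1)) + 1 := by omega
      rw [h3, pow_succ]; ring
    rw [hp, ← hHdef]
    have hne : (2 : ℝ) ^ (k - (S.card + 1)) ≠ 0 := by positivity
    field_simp
  have hL : (∑ x : Fin k → Bool, (1 / (k : ℝ)) * ∑ S ∈ P,
      ((Nat.choose (k - 1) S.card : ℝ))⁻¹ *
        ((∑ x' ∈ univ.filter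
          (fun x' : Fin k → Bool => ∀ j ∈ insert i S, x' j = x j), h x')
            / 2 ^ (k - S.card))) = H / 2 := by
    rw [← Finset.mul_sum, Finset.sum_comm]
    have e : ∀ S ∈ P, (∑ x : Fin k → Bool, ((Nat.choose (k - 1) S.card : ℝ))⁻¹ *
        ((∑ x' ∈ univ.filter
          (fun x' : Fin k → Bool => ∀ j ∈ insert i S, x' j = x j), h x')
            / 2 ^ (k - S.card)))
        = ((Nat.choose (k - 1) S.card : ℝ))⁻¹ * (H / 2) := by
      intro S hS
      rw [← Finset.mul_sum, hQ S hS]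
    rw [Finset.sum_congr rfl e, ← Finset.sum_mul, hP, sum_choose_inv i]
    have hk' : (k : ℝ) ≠ 0 := by positivity
    field_simp
  have hR : (∑ x : Fin k → Bool, (1 / (2 : ℝ) ^ (k - 1)) * ∑ S ∈ P,
      ((∑ x' ∈ univ.filter
          (fun x' : Fin k → Bool => ∀ j ∈ insert i S, x' j = x j), h x')
            / 2 ^ (k - S.card))) = H / 2 := by
    rw [← Finset.mul_sum, Finset.sum_comm, Finset.sum_congr rfl hQ, Finset.sum_const]
    have hcardP : P.card = 2 ^ (k - 1) := by
      rw [hP, Finset.card_powerset, card_erase_of_mem (mem_univ i), card_univ,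
        Fintype.card_fin]
    rw [hcardP, nsmul_eq_mul]
    push_cast
    have hne : (2 : ℝ) ^ (k - 1) ≠ 0 := by positivity
    field_simp
  rw [hL, hR]
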